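/- Let S : ℝⁿ ⇉ ℝᵐ be a set-valued mapping whose graph is a union of finitely many polyhedral convex sets, and let Q ⊆ dom S be convex. Suppose S is calm on Q with constant κ, i.e., for every q ∈ Q there is ρ_q > 0 with S(q') ⊆ S(q) + κ‖q' − q‖𝔹 for all q' ∈ Q ∩ 𝔹_{ρ_q}(q). If S is inner semicontinuous around (q̄, x̄) ∈ graph S relative to Q, then S is Lipschitz-like relative to Q at q̄ for x̄ with modulus κ. -/

import Mathlib

open Topology

noncomputable section

variable {n m : ℕ}

/-- A polyhedral convex subset of the product `ℝⁿ × ℝᵐ`. -/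
def IsPolyhedralProd {n m : ℕ}
    (P : Set (EuclideanSpace ℝ (Fin n) × EuclideanSpace ℝ (Fin m))) : Prop :=
  ∃ (k : ℕ) (a : Fin k → EuclideanSpace ℝ (Fin n)) (b : Fin k → EuclideanSpace ℝ (Fin m))
    (c : Fin k → ℝ),
    P = {p | ∀ i, (inner ℝ (a i) p.1 : ℝ) + (inner ℝ (b i) p.2 : ℝ) ≤ c i}

/-!
Fix `z ∈ S q ∩ W` and follow `g t = dist (z, S (γ t))` along the segment `γ t` from `q` to `q'`,
which stays in `Q`. Calmness at `γ T` gives `g T ≤ g t + κ ‖q - q'‖ (T - t)` for `t ≤ T` close to `T`,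
and inner semicontinuity at `γ T` makes `g` upper semicontinuous at `T` as long as the almost nearest
points of `S (γ T)` to `z` lie in `W`. A supremum argument on `[0, 1]` then gives
`g 1 < κ ‖q - q'‖ + ε` for every `ε > 0`, and since the polyhedral graph makes `S q'` closed, the
distance from `z` to `S q'` is attained.
-/

open Metric Set Filter AffineMap

theorem IsPolyhedralProd.isClosed
    {P : Set (EuclideanSpace ℝ (Fin n) × EuclideanSpace ℝ (Fin m))}
    (h : IsPolyhedralProd P) : IsClosed P := by
  obtain ⟨k, a, b, c, rfl⟩ := h
  simp only [ofPred_forall]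
  exact isClosed_iInter fun i => isClosed_le (by fun_prop) continuous_const

theorem Real.mem_of_forall_nhdsLE_of_forall_nhdsGT {A : Set ℝ} {a b : ℝ} (hab : a ≤ b)
    (ha : a ∈ A) (hleft : ∀ T ∈ Icc a b, ∀ᶠ t in 𝓝[≤] T, t ∈ A ∩ Icc a b → T ∈ A)
    (hright : ∀ T ∈ A ∩ Ico a b, ∀ᶠ t in 𝓝[>] T, t ∈ A) : b ∈ A := by
  have hne : (A ∩ Icc a b).Nonempty := ⟨a, ha, left_mem_Icc.2 hab⟩
  have hbdd : BddAbove (A ∩ Icc a b) := ⟨b, fun t ht => ht.2.2⟩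
  set T := sSup (A ∩ Icc a b)
  have hT : T ∈ Icc a b :=
    ⟨le_csSup hbdd ⟨ha, left_mem_Icc.2 hab⟩, csSup_le hne fun t ht => ht.2.2⟩
  have hTA : T ∈ A := by
    obtain ⟨l, hl, hlT⟩ := mem_nhdsLE_iff_exists_Ioc_subset.1 (hleft T hT)
    obtain ⟨t, ht, hlt⟩ := exists_lt_of_lt_csSup hne hl
    exact hlT ⟨hlt, le_csSup hbdd ht⟩ ht
  obtain hTb | hTb := hT.2.lt_or_eq
  · obtain ⟨t, htA, hTt, htb⟩ := ((hright T ⟨hTA, hT.1, hTb⟩).and (Ioo_mem_nhdsGT hTb)).exists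
    exact absurd (le_csSup hbdd ⟨htA, hT.1.trans hTt.le, htb.le⟩) hTt.not_ge
  · exact hTb ▸ hTA

theorem Metric.infDist_le_infDist_add_of_forall_infDist_le {α : Type*} [PseudoMetricSpace α]
    (z : α) {A B : Set α} (hB : B.Nonempty) {c : ℝ} (h : ∀ x ∈ B, infDist x A ≤ c) :
    infDist z A ≤ infDist z B + c := by
  have : infDist z A - c ≤ infDist z B := (le_infDist hB).2 fun x hx => by
    linarith [infDist_le_infDist_add_dist (s := A) (x := z) (y := x), h x hx]
  linarith

theorem infDist_le_of_calm_of_innerSemicontinuous {F : Type*} [PseudoMetricSpace F]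
    {Φ : ℝ → Set F} {a b L R : ℝ} {z : F} {W : Set F} (hab : a ≤ b) (hL : 0 ≤ L)
    (hLR : L * (b - a) < R) (hne : ∀ t ∈ Icc a b, (Φ t).Nonempty)
    (hcalm : ∀ T ∈ Icc a b, ∀ᶠ t in 𝓝 T, t ∈ Icc a b →
      ∀ x ∈ Φ t, infDist x (Φ T) ≤ L * |t - T|)
    (hisc : ∀ T ∈ Icc a b, ∀ O, IsOpen O → (Φ T ∩ W ∩ O).Nonempty →
      ∀ᶠ t in 𝓝 T, t ∈ Icc a b → (Φ t ∩ O).Nonempty)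
    (hz : z ∈ Φ a) (hW : ball z R ⊆ W) : infDist z (Φ b) ≤ L * (b - a) := by
  refine le_of_forall_pos_lt_add fun ε hε => ?_
  set ε' := min ε (R - L * (b - a))
  have hε' : 0 < ε' := lt_min hε (sub_pos.2 hLR)
  set A := {t | infDist z (Φ t) < L * (t - a) + ε'}
  suffices b ∈ A from this.trans_le (by gcongr; exact min_le_left _ _)
  refine Real.mem_of_forall_nhdsLE_of_forall_nhdsGT hab
    (by simpa [A, infDist_zero_of_mem hz] using hε') (fun T hT => ?_) ?_
  · filter_upwards [nhdsWithin_le_nhds (hcalm T hT), self_mem_nhdsWithin]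
      with t htT (htT' : t ≤ T) ⟨htA, ht⟩
    have := infDist_le_infDist_add_of_forall_infDist_le z (hne t ht) (htT ht)
    rw [abs_of_nonpos (sub_nonpos.2 htT')] at this
    have htA : infDist z (Φ t) < L * (t - a) + ε' := htA
    show infDist z (Φ T) < L * (T - a) + ε'
    linarith
  · rintro T ⟨hTA, hT⟩
    have hTA : infDist z (Φ T) < L * (T - a) + ε' := hTA
    set δ := L * (T - a) + ε' - infDist z (Φ T)
    have hδ : 0 < δ := sub_pos.2 hTA
    obtain ⟨x, hx, hzx⟩ := (infDist_lt_iff (x := z) (hne T (Ico_subset_Icc_self hT))).1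
      (lt_add_of_pos_right _ (half_pos hδ))
    have hxW : x ∈ W := hW <| by
      have : L * (T - a) ≤ L * (b - a) := by gcongr; exact hT.2.le
      rw [mem_ball, dist_comm]
      linarith [min_le_right ε (R - L * (b - a))]
    filter_upwards [nhdsWithin_le_nhds (hisc T (Ico_subset_Icc_self hT) (ball x (δ / 2))
        isOpen_ball ⟨x, ⟨hx, hxW⟩, mem_ball_self (half_pos hδ)⟩), Ioo_mem_nhdsGT hT.2]
      with t ht ⟨hTt, htb⟩
    obtain ⟨y, hy, hyx⟩ := ht ⟨hT.1.trans hTt.le, htb.le⟩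
    calc infDist z (Φ t) ≤ dist z y := infDist_le_dist_of_mem hy
      _ ≤ dist z x + dist x y := dist_triangle _ _ _
      _ < (infDist z (Φ T) + δ / 2) + δ / 2 := add_lt_add hzx (by rwa [dist_comm])
      _ = L * (T - a) + ε' := by ring
      _ ≤ L * (t - a) + ε' := by gcongr

section Segment

variable {E F : Type*} [NormedAddCommGroup E] [NormedSpace ℝ E] [NormedAddCommGroup F]
  {S : E → Set F} {Q : Set E} {q q' : E} {T : ℝ}

theorem eventually_infDist_lineMap_le_of_calm (hQ : Convex ℝ Q) {κ : ℝ}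
    (hcalm : ∀ q ∈ Q, ∃ ρ > (0 : ℝ), ∀ q' ∈ Q, ‖q' - q‖ ≤ ρ →
      S q' ⊆ {z | ∃ s ∈ S q, ‖z - s‖ ≤ κ * ‖q' - q‖})
    (hq : q ∈ Q) (hq' : q' ∈ Q) (hT : T ∈ Icc (0 : ℝ) 1) :
    ∀ᶠ t in 𝓝 T, t ∈ Icc (0 : ℝ) 1 → ∀ x ∈ S (lineMap q q' t),
      infDist x (S (lineMap q q' T)) ≤ κ * dist q q' * |t - T| := by
  obtain ⟨ρ, hρ, hρcalm⟩ := hcalm _ (hQ.lineMap_mem hq hq' hT)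
  filter_upwards [(lineMap_continuous : Continuous (lineMap q q' : ℝ → E)).continuousAt.preimage_mem_nhds
    (closedBall_mem_nhds _ hρ)] with t ht ht01 x hx
  obtain ⟨s, hs, hxs⟩ := hρcalm _ (hQ.lineMap_mem hq hq' ht01)
    (by rwa [← dist_eq_norm, ← mem_closedBall]) hx
  calc infDist x _ ≤ dist x s := infDist_le_dist_of_mem hs
    _ ≤ κ * ‖lineMap q q' t - lineMap q q' T‖ := by rwa [dist_eq_norm]
    _ = κ * dist q q' * |t - T| := by
      rw [← dist_eq_norm, dist_lineMap_lineMap, Real.dist_eq]; ring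

theorem eventually_lineMap_inter_nonempty_of_innerSemicontinuous {V : Set E} {W : Set F}
    (hQV : Convex ℝ (Q ∩ V))
    (hisc : ∀ q ∈ Q ∩ V, ∀ O : Set F, IsOpen O → (S q ∩ W ∩ O).Nonempty →
      ∃ V' ∈ 𝓝 q, ∀ q' ∈ Q ∩ V', (S q' ∩ O).Nonempty)
    (hq : q ∈ Q ∩ V) (hq' : q' ∈ Q ∩ V) (hT : T ∈ Icc (0 : ℝ) 1) {O : Set F} (hO : IsOpen O)
    (hTO : (S (lineMap q q' T) ∩ W ∩ O).Nonempty) :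
    ∀ᶠ t in 𝓝 T, t ∈ Icc (0 : ℝ) 1 → (S (lineMap q q' t) ∩ O).Nonempty := by
  obtain ⟨V', hV', hV'isc⟩ := hisc _ (hQV.lineMap_mem hq hq' hT) O hO hTO
  filter_upwards [(lineMap_continuous : Continuous (lineMap q q' : ℝ → E)).continuousAt.preimage_mem_nhds hV']
    with t ht ht01
  exact hV'isc _ ⟨(hQV.lineMap_mem hq hq' ht01).1, ht⟩

end Segment

theorem lipschitzLike_of_calm_of_innerSemicontinuous {E F : Type*} [NormedAddCommGroup E]
    [NormedSpace ℝ E] [NormedAddCommGroup F] [ProperSpace F] {S : E → Set F}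
    (hS : ∀ q, IsClosed (S q)) {Q : Set E} (hQconv : Convex ℝ Q)
    (hQdom : Q ⊆ {q | (S q).Nonempty}) {κ : ℝ} (hκ : 0 ≤ κ)
    (hcalm : ∀ q ∈ Q, ∃ ρ > (0 : ℝ), ∀ q' ∈ Q, ‖q' - q‖ ≤ ρ →
      S q' ⊆ {z | ∃ s ∈ S q, ‖z - s‖ ≤ κ * ‖q' - q‖})
    {q0 : E} {x0 : F}
    (hisc : ∃ V ∈ 𝓝 q0, ∃ W ∈ 𝓝 x0, ∀ q ∈ Q ∩ V,
      ∀ O : Set F, IsOpen O → (S q ∩ W ∩ O).Nonempty →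
        ∃ V' ∈ 𝓝 q, ∀ q' ∈ Q ∩ V', (S q' ∩ O).Nonempty) :
    ∃ V ∈ 𝓝 q0, ∃ W ∈ 𝓝 x0, ∀ q ∈ Q ∩ V, ∀ q' ∈ Q ∩ V,
      S q ∩ W ⊆ {z | ∃ s ∈ S q', ‖z - s‖ ≤ κ * ‖q - q'‖} := by
  obtain ⟨V, hV, W, hW, hisc⟩ := hisc
  obtain ⟨δ₀, hδ₀, hδ₀V⟩ := Metric.mem_nhds_iff.1 hV
  obtain ⟨r, hr, hrW⟩ := Metric.mem_nhds_iff.1 hW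
  set δ := min δ₀ (r / (4 * (κ + 1)))
  have hδ : 0 < δ := by positivity
  refine ⟨ball q0 δ, ball_mem_nhds _ hδ, ball x0 (r / 2), ball_mem_nhds _ (by positivity), ?_⟩
  rintro q ⟨hqQ, hqB⟩ q' ⟨hq'Q, hq'B⟩ z ⟨hz, hzB⟩
  have hκd : κ * dist q q' < r / 2 := by
    have hqq' : dist q q' < 2 * δ := by
      linarith [dist_triangle_right q q' q0, mem_ball.1 hqB, mem_ball.1 hq'B]
    calc κ * dist q q' ≤ (κ + 1) * dist q q' := by gcongr; linarith
      _ < (κ + 1) * (2 * δ) := by gcongr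
      _ ≤ (κ + 1) * (2 * (r / (4 * (κ + 1)))) := by gcongr; exact min_le_right _ _
      _ = r / 2 := by field_simp; ring
  have hBV : ball q0 δ ⊆ V := (ball_subset_ball (min_le_left _ _)).trans hδ₀V
  have hzW : ball z (r / 2) ⊆ W :=
    (ball_subset_ball' (by linarith [mem_ball.1 hzB])).trans hrW
  have hinf : infDist z (S q') ≤ κ * dist q q' := by
    simpa using infDist_le_of_calm_of_innerSemicontinuous (Φ := fun t => S (lineMap q q' t))
      zero_le_one (by positivity) (by simpa using hκd)
      (fun t ht => hQdom (hQconv.lineMap_mem hqQ hq'Q ht))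
      (fun T hT => eventually_infDist_lineMap_le_of_calm hQconv hcalm hqQ hq'Q hT)
      (fun T hT O hO hTO => eventually_lineMap_inter_nonempty_of_innerSemicontinuous
        (hQconv.inter (convex_ball _ _)) (fun p hp => hisc p ⟨hp.1, hBV hp.2⟩)
        ⟨hqQ, hqB⟩ ⟨hq'Q, hq'B⟩ hT hO hTO)
      (by simpa using hz) hzW
  obtain ⟨s, hs, hzs⟩ := (hS q').exists_infDist_eq_dist (hQdom hq'Q) z
  exact ⟨s, hs, by rw [← dist_eq_norm, ← hzs, ← dist_eq_norm]; exact hinf⟩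

theorem stmt15_general (S : EuclideanSpace ℝ (Fin n) → Set (EuclideanSpace ℝ (Fin m)))
    (hpoly : ∃ (N : ℕ) (P : Fin N → Set (EuclideanSpace ℝ (Fin n) × EuclideanSpace ℝ (Fin m))),
      (∀ i, IsPolyhedralProd (P i)) ∧ {p | p.2 ∈ S p.1} = ⋃ i, P i)
    (Q : Set (EuclideanSpace ℝ (Fin n))) (hQconv : Convex ℝ Q)
    (hQdom : Q ⊆ {q | (S q).Nonempty})
    (κ : ℝ) (hκ : 0 ≤ κ)
    (hcalm : ∀ q ∈ Q, ∃ ρ > (0:ℝ), ∀ q' ∈ Q, ‖q' - q‖ ≤ ρ →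
      S q' ⊆ {z | ∃ s ∈ S q, ‖z - s‖ ≤ κ * ‖q' - q‖})
    (q0 : EuclideanSpace ℝ (Fin n)) (x0 : EuclideanSpace ℝ (Fin m))
    (hisc : ∃ V ∈ 𝓝 q0, ∃ W ∈ 𝓝 x0, ∀ q ∈ Q ∩ V,
      ∀ O : Set (EuclideanSpace ℝ (Fin m)), IsOpen O → (S q ∩ W ∩ O).Nonempty →
        ∃ V' ∈ 𝓝 q, ∀ q' ∈ Q ∩ V', (S q' ∩ O).Nonempty) :
    ∃ V ∈ 𝓝 q0, ∃ W ∈ 𝓝 x0, ∀ q ∈ Q ∩ V, ∀ q' ∈ Q ∩ V,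
      S q ∩ W ⊆ {z | ∃ s ∈ S q', ‖z - s‖ ≤ κ * ‖q - q'‖} := by
  obtain ⟨N, P, hP, hgraph⟩ := hpoly
  have hgraph_closed : IsClosed {p : EuclideanSpace ℝ (Fin n) × EuclideanSpace ℝ (Fin m) |
      p.2 ∈ S p.1} := hgraph ▸ isClosed_iUnion_of_finite fun i => (hP i).isClosed
  exact lipschitzLike_of_calm_of_innerSemicontinuous
    (fun q => hgraph_closed.preimage (Continuous.prodMk_right q)) hQconv hQdom hκ hcalm hisc

/-- for a polyhedral multifunction calm on a convex `Q ⊆ dom S` with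
constant `κ`, inner semicontinuity around `(q̄, x̄)` relative to `Q` implies the
Lipschitz-like property relative to `Q` at `q̄` for `x̄` with modulus `κ`. -/
theorem stmt15 (S : EuclideanSpace ℝ (Fin n) → Set (EuclideanSpace ℝ (Fin m)))
    (hpoly : ∃ (N : ℕ) (P : Fin N → Set (EuclideanSpace ℝ (Fin n) × EuclideanSpace ℝ (Fin m))),
      (∀ i, IsPolyhedralProd (P i)) ∧ {p | p.2 ∈ S p.1} = ⋃ i, P i)
    (Q : Set (EuclideanSpace ℝ (Fin n))) (hQconv : Convex ℝ Q)
    (hQdom : Q ⊆ {q | (S q).Nonempty})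
    (κ : ℝ) (hκ : 0 ≤ κ)
    (hcalm : ∀ q ∈ Q, ∃ ρ > (0:ℝ), ∀ q' ∈ Q, ‖q' - q‖ ≤ ρ →
      S q' ⊆ {z | ∃ s ∈ S q, ‖z - s‖ ≤ κ * ‖q' - q‖})
    (q0 : EuclideanSpace ℝ (Fin n)) (x0 : EuclideanSpace ℝ (Fin m))
    (hq0 : q0 ∈ Q) (hx0 : x0 ∈ S q0)
    (hisc : ∃ V ∈ 𝓝 q0, ∃ W ∈ 𝓝 x0, ∀ q ∈ Q ∩ V,
      ∀ O : Set (EuclideanSpace ℝ (Fin m)), IsOpen O → (S q ∩ W ∩ O).Nonempty →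
        ∃ V' ∈ 𝓝 q, ∀ q' ∈ Q ∩ V', (S q' ∩ O).Nonempty) :
    ∃ V ∈ 𝓝 q0, ∃ W ∈ 𝓝 x0, ∀ q ∈ Q ∩ V, ∀ q' ∈ Q ∩ V,
      S q ∩ W ⊆ {z | ∃ s ∈ S q', ‖z - s‖ ≤ κ * ‖q - q'‖} :=
  stmt15_general S hpoly Q hQconv hQdom κ hκ hcalm q0 x0 hisc
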